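/- Let η be a positive equivalence relation. If there are at least two η-infinite r.e. sets, then there is an η-family that is explanatorily learnable but not weakly confidently learnable. -/

import Mathlib

namespace PEL

/-- Evaluation of the `e`-th partial recursive function (via the standard
numbering of `Nat.Partrec.Code`). -/
def evalCode (e : ℕ) (x : ℕ) : Part ℕ :=
  (Denumerable.ofNat Nat.Partrec.Code e).eval x

/-- The `e`-th recursively enumerable set `W_e = dom φ_e`. -/
def W (e : ℕ) : Set ℕ := {x | (evalCode e x).Dom}

/-- A set is r.e. iff it equals some `W_e`. -/
def RESet (S : Set ℕ) : Prop := ∃ e, W e = S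

/-- A positive equivalence relation: an r.e. equivalence relation on ℕ
with infinitely many equivalence classes. -/
structure PosEq where
  rel : ℕ → ℕ → Prop
  equiv : Equivalence rel
  re : ∃ e, ∀ x y, rel x y ↔ Nat.pair x y ∈ W e
  classes_infinite : (Set.range fun x => {y | rel x y}).Infinite

/-- The η-equivalence class of `x`. -/
def classOf (η : PosEq) (x : ℕ) : Set ℕ := {y | η.rel x y}

/-- A set is η-closed iff it is a union of η-equivalence classes. -/
def EtaClosed (η : PosEq) (S : Set ℕ) : Prop := ∀ x ∈ S, classOf η x ⊆ S

/-- A set is η-finite iff it is a union of finitely many η-equivalence classes. -/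
def EtaFinite (η : PosEq) (S : Set ℕ) : Prop :=
  EtaClosed η S ∧ (classOf η '' S).Finite

/-- A set is η-infinite iff it is a union of infinitely many η-equivalence classes. -/
def EtaInfinite (η : PosEq) (S : Set ℕ) : Prop :=
  EtaClosed η S ∧ (classOf η '' S).Infinite

/-- `f` is a one-one uniformly r.e. numbering of the class `C`:
`f` is computable, `i ↦ W_{f i}` is injective, and `C = {W_{f i} : i ∈ ℕ}`. -/
def OneOneNumbering (f : ℕ → ℕ) (C : Set (Set ℕ)) : Prop :=
  Computable f ∧ (∀ i j, W (f i) = W (f j) → i = j) ∧ C = Set.range fun i => W (f i)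

/-- An η-family: an (automatically infinite) class of η-closed r.e. sets
admitting a one-one uniformly r.e. numbering. -/
def EtaFamily (η : PosEq) (C : Set (Set ℕ)) : Prop :=
  (∀ L ∈ C, EtaClosed η L) ∧ ∃ f, OneOneNumbering f C

/-- `a η n` is the `n`-th (in ascending order) least representative of an
η-equivalence class. -/
noncomputable def a (η : PosEq) (n : ℕ) : ℕ := Nat.nth (fun x => ∀ y, η.rel x y → x ≤ y) n

/-- `A η n = [a_0] ∪ … ∪ [a_{n-1}]`. -/
def A (η : PosEq) (n : ℕ) : Set ℕ := {x | ∃ m < n, η.rel (a η m) x}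

/-- The ascending family `𝒜_η = {A_n : n ∈ ℕ}`. -/
def ascendingFamily (η : PosEq) : Set (Set ℕ) := Set.range (A η)

/-- A learner: a map from finite sequences over ℕ ∪ {#} (with `none` as the
pause symbol `#`) to hypotheses in ℕ ∪ {?} (with `none` as `?`). -/
abbrev Learner := List (Option ℕ) → Option ℕ

/-- The content of a text. -/
def cntT (T : ℕ → Option ℕ) : Set ℕ := {x | ∃ n, T n = some x}

/-- `T` is a text for `L`. -/
def IsText (T : ℕ → Option ℕ) (L : Set ℕ) : Prop := cntT T = L

/-- The initial segment `T[n] = T(0), …, T(n-1)`. -/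
def seg (T : ℕ → Option ℕ) (n : ℕ) : List (Option ℕ) := (List.range n).map T

/-- The content of a finite sequence. -/
def cntL (σ : List (Option ℕ)) : Set ℕ := {x | some x ∈ σ}

/-- Explanatory learning with hypotheses interpreted in hypothesis space `H`. -/
def ExLearnsIn (H : ℕ → Set ℕ) (M : Learner) (C : Set (Set ℕ)) : Prop :=
  ∀ L ∈ C, ∀ T, IsText T L →
    ∃ n e, M (seg T n) = some e ∧ H e = L ∧ ∀ j, n ≤ j → M (seg T j) = M (seg T n)

/-- Behaviourally correct learning with hypothesis space `H`. -/
def BCLearnsIn (H : ℕ → Set ℕ) (M : Learner) (C : Set (Set ℕ)) : Prop :=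
  ∀ L ∈ C, ∀ T, IsText T L →
    ∃ n, ∀ j, n ≤ j → ∃ e, M (seg T j) = some e ∧ H e = L

/-- Finite (one-shot) learning with hypothesis space `H`. -/
def FinLearnsIn (H : ℕ → Set ℕ) (M : Learner) (C : Set (Set ℕ)) : Prop :=
  ∀ L ∈ C, ∀ T, IsText T L →
    ∃ n e, M (seg T n) = some e ∧ H e = L ∧ (∀ m, m < n → M (seg T m) = none) ∧
      ∀ j, n ≤ j → M (seg T j) = M (seg T n)

/-- The sequence of hypotheses of `M` on text `T` converges. -/
def ConvergesOn (M : Learner) (T : ℕ → Option ℕ) : Prop :=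
  ∃ n, ∀ j, n ≤ j → M (seg T j) = M (seg T n)

/-- Confident learning with hypothesis space `H`: explanatory learning with
convergence on every text for every subset of ℕ. -/
def ConfLearnsIn (H : ℕ → Set ℕ) (M : Learner) (C : Set (Set ℕ)) : Prop :=
  ExLearnsIn H M C ∧ ∀ T, ConvergesOn M T

/-- Vacillatory learning with hypothesis space `H`. -/
def VacLearnsIn (H : ℕ → Set ℕ) (M : Learner) (C : Set (Set ℕ)) : Prop :=
  BCLearnsIn H M C ∧
    ∀ L ∈ C, ∀ T, IsText T L → {h : Option ℕ | ∃ n, 1 ≤ n ∧ M (seg T n) = h}.Finite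

/-- Weakly confident learning with hypothesis space `H`: explanatory learning
with convergence on every text consistent with the class. -/
def WConfLearnsIn (H : ℕ → Set ℕ) (M : Learner) (C : Set (Set ℕ)) : Prop :=
  ExLearnsIn H M C ∧ ∀ T, (∃ L ∈ C, cntT T ⊆ L) → ConvergesOn M T

def ExLearnable (C : Set (Set ℕ)) : Prop :=
  ∃ M : Learner, Computable M ∧ ExLearnsIn W M C

def BCLearnable (C : Set (Set ℕ)) : Prop :=
  ∃ M : Learner, Computable M ∧ BCLearnsIn W M C

def FinLearnable (C : Set (Set ℕ)) : Prop :=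
  ∃ M : Learner, Computable M ∧ FinLearnsIn W M C

def ConfLearnable (C : Set (Set ℕ)) : Prop :=
  ∃ M : Learner, Computable M ∧ ConfLearnsIn W M C

def VacLearnable (C : Set (Set ℕ)) : Prop :=
  ∃ M : Learner, Computable M ∧ VacLearnsIn W M C

def WConfLearnable (C : Set (Set ℕ)) : Prop :=
  ∃ M : Learner, Computable M ∧ WConfLearnsIn W M C

/-!
Fix an η-infinite r.e. set `S` and a point `c ∉ S` (the two distinct η-infinite sets provide both).
Let `Sstage t` be the part of `S` enumerated by stage `t` and `approx t` its η-closure. Each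
`approx t` meets only finitely many classes, so `approx` acquires a new class at infinitely many
stages, and its values just after these growth stages form a strictly increasing chain
`V 0 ⊂ V 1 ⊂ ⋯` of η-closed subsets of `S`. Non-growth at a stage is r.e., so counting apparent
growth stages makes the `V n` uniformly r.e., and `{ℕ} ∪ {V n}` has a one-one numbering. It is
Ex-learnable: conjecture `ℕ` once an element equivalent to `c` shows up, and otherwise `approx t`
for the last `t` such that `Sstage t` has fully appeared. It is not weakly confidently learnable,
because `ℕ` contains the whole chain: a learner can be led, along a single text for a subset of
`ℕ`, to conjecture `V 0`, `V 1`, … in turn.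
-/

open Filter Nat.Partrec Code

/-- The classical `W_{e,s}`: the elements of `W e` enumerated within `s` steps. -/
def Wstage (e s : ℕ) : Set ℕ := {x | (evaln s (Denumerable.ofNat Code e) x).isSome}

instance (e s x : ℕ) : Decidable (x ∈ Wstage e s) := inferInstanceAs (Decidable (_ = true))

lemma lt_of_mem_Wstage {e s x : ℕ} (h : x ∈ Wstage e s) : x < s := by
  obtain ⟨_, hx⟩ := Option.isSome_iff_exists.1 h
  exact evaln_bound hx

lemma Wstage_mono (e : ℕ) : Monotone (Wstage e) := fun _ _ hst _ h => by
  obtain ⟨_, hx⟩ := Option.isSome_iff_exists.1 h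
  exact Option.isSome_iff_exists.2 ⟨_, evaln_mono hst hx⟩

lemma Wstage_zero (e : ℕ) : Wstage e 0 = ∅ :=
  Set.eq_empty_of_forall_notMem fun _ h => Nat.not_lt_zero _ (lt_of_mem_Wstage h)

lemma mem_W_iff_exists_Wstage {e x : ℕ} : x ∈ W e ↔ ∃ s, x ∈ Wstage e s := by
  simp only [W, evalCode, Wstage, Set.mem_ofPred_eq, Part.dom_iff_mem, evaln_complete,
    Option.isSome_iff_exists, Option.mem_def]
  exact ⟨fun ⟨y, s, h⟩ => ⟨s, y, h⟩, fun ⟨s, y, h⟩ => ⟨y, s, h⟩⟩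

lemma mem_W_iff_eventually {e x : ℕ} : x ∈ W e ↔ ∀ᶠ s in atTop, x ∈ Wstage e s := by
  rw [mem_W_iff_exists_Wstage, eventually_atTop]
  exact ⟨fun ⟨s, hs⟩ => ⟨s, fun _ h => Wstage_mono e h hs⟩, fun ⟨s, hs⟩ => ⟨s, hs s le_rfl⟩⟩

lemma primrecRel_mem_Wstage (e : ℕ) : PrimrecRel fun s x => x ∈ Wstage e s :=
  Primrec.primrecPred <| (Primrec.option_isSome.comp <|
    primrec_evaln.comp ((Primrec.fst.pair (Primrec.const (Denumerable.ofNat Code e))).pair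
      Primrec.snd)).of_eq fun _ => Bool.decide_eq_true.symm

lemma primrec_count {β : Type*} [Primcodable β] {R : ℕ → β → Prop} [DecidableRel R]
    (hR : PrimrecRel R) : Primrec₂ fun n b => Nat.count (R · b) n :=
  Primrec.of_eq (Primrec.list_length.comp ((PrimrecRel.listFilter hR).comp
    (Primrec.list_range.comp Primrec.fst) Primrec.snd)) fun _ => by
      simp [Nat.count, List.countP_eq_length_filter]

lemma primrecPred_exists_lt {β : Type*} [Primcodable β] {R : ℕ → β → Prop} {f : β → ℕ}
    (hR : PrimrecRel R) (hf : Primrec f) : PrimrecPred fun b => ∃ y < f b, R y b :=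
  (hR.exists_mem_list.comp (Primrec.list_range.comp hf) Primrec.id).of_eq fun _ => by simp

lemma primrecPred_forall_lt {β : Type*} [Primcodable β] {R : ℕ → β → Prop} {f : β → ℕ}
    (hR : PrimrecRel R) (hf : Primrec f) : PrimrecPred fun b => ∀ y < f b, R y b :=
  (hR.forall_mem_list.comp (Primrec.list_range.comp hf) Primrec.id).of_eq fun _ => by simp

lemma primrecRel_some_mem : PrimrecRel fun (y : ℕ) (σ : List (Option ℕ)) => some y ∈ σ :=
  ((PrimrecRel.exists_mem_list Primrec.eq).comp Primrec.snd
    (Primrec.option_some.comp Primrec.fst)).of_eq fun _ => by simp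

lemma rePred_exists_of_computablePred {α : Type*} [Primcodable α] {Q : α → ℕ → Prop}
    (hQ : ComputablePred fun p : α × ℕ => Q p.1 p.2) : REPred fun a => ∃ u, Q a u := by
  classical
  have hd : Computable₂ fun a u => decide (Q a u) := hQ.decide
  refine (Partrec.rfind hd.partrec₂).dom_re.of_eq fun a => ?_
  simp [Nat.rfind_dom]

lemma exists_computable_W_eq {V : ℕ → Set ℕ} (hV : REPred fun p : ℕ × ℕ => p.2 ∈ V p.1) :
    ∃ f : ℕ → ℕ, Computable f ∧ ∀ n, W (f n) = V n := by
  have hg : Partrec fun v : ℕ => (Part.assert (v.unpair.2 ∈ V v.unpair.1) fun _ => Part.some ()).map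
      fun _ => (0 : ℕ) :=
    (hV.comp Computable.unpair).map (Computable.const 0).to₂
  obtain ⟨c, hc⟩ := Code.exists_code.1 (Partrec.nat_iff.1 hg)
  refine ⟨fun n => Encodable.encode (c.curry n),
    (Primrec.encode.comp (primrec₂_curry.comp (Primrec.const c) Primrec.id)).to_comp, fun n => ?_⟩
  ext x
  simp [W, evalCode, eval_curry, hc, Part.assert]

def univIdx : ℕ := Encodable.encode Code.zero

lemma W_univIdx : W univIdx = Set.univ := by
  ext x
  simp only [W, evalCode, univIdx, Denumerable.ofNat_encode, Code.eval, Set.mem_univ, iff_true]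
  trivial

section Texts

variable {T : ℕ → Option ℕ}

@[simp] lemma length_seg (T : ℕ → Option ℕ) (n : ℕ) : (seg T n).length = n := by simp [seg]

@[simp] lemma getElem_seg {n i : ℕ} (hi : i < (seg T n).length) : (seg T n)[i] = T i := by
  simp [seg]

lemma mem_cntL_seg {i n x : ℕ} (hx : T i = some x) (hi : i < n) : x ∈ cntL (seg T n) := by
  simp only [cntL, seg, Set.mem_ofPred_eq, List.mem_map, List.mem_range]
  exact ⟨i, hi, hx⟩

lemma cntL_seg_subset (T : ℕ → Option ℕ) (n : ℕ) : cntL (seg T n) ⊆ cntT T := by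
  intro x hx
  obtain ⟨i, -, hi⟩ := List.mem_map.1 hx
  exact ⟨i, hi⟩

lemma seg_prefix {m n : ℕ} (h : m ≤ n) : seg T m <+: seg T n :=
  List.prefix_iff_eq_take.2 (by simp [seg, ← List.map_take, List.take_range, h])

lemma eventually_subset_cntL_seg {F : Set ℕ} (hF : F.Finite) (h : F ⊆ cntT T) :
    ∀ᶠ j in atTop, F ⊆ cntL (seg T j) := by
  refine (hF.eventually_all (p := fun x j => x ∈ cntL (seg T j))).2 fun x hx => ?_
  obtain ⟨i, hi⟩ := h hx
  exact eventually_atTop.2 ⟨i + 1, fun j hj => mem_cntL_seg hi (by omega)⟩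

lemma exLearnsIn_of_eventually {H : ℕ → Set ℕ} {M : Learner} {C : Set (Set ℕ)}
    (h : ∀ L ∈ C, ∀ T, IsText T L → ∃ e, H e = L ∧ ∀ᶠ j in atTop, M (seg T j) = some e) :
    ExLearnsIn H M C := by
  intro L hL T hT
  obtain ⟨e, hHe, hM⟩ := h L hL T hT
  obtain ⟨n, hn⟩ := eventually_atTop.1 hM
  exact ⟨n, e, hn n le_rfl, hHe, fun j hj => (hn j hj).trans (hn n le_rfl).symm⟩

open Classical in
noncomputable def extendText (σ : List (Option ℕ)) (L : Set ℕ) (i : ℕ) : Option ℕ :=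
  if h : i < σ.length then σ[i] else if i - σ.length ∈ L then some (i - σ.length) else none

lemma seg_extendText (σ : List (Option ℕ)) (L : Set ℕ) :
    seg (extendText σ L) σ.length = σ :=
  List.ext_getElem (length_seg _ _) fun i hi _ => by
    simp only [getElem_seg, extendText, dif_pos (show i < σ.length by simpa using hi)]

lemma isText_extendText {σ : List (Option ℕ)} {L : Set ℕ} (hσ : cntL σ ⊆ L) :
    IsText (extendText σ L) L := by
  ext x
  constructor
  · rintro ⟨i, hi⟩
    unfold extendText at hi
    split_ifs at hi with h₁ h₂
    · exact hσ (show some x ∈ σ from hi ▸ List.getElem_mem h₁)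
    · exact Option.some_injective _ hi ▸ h₂
  · intro hx
    exact ⟨σ.length + x, by simp [extendText, hx]⟩

lemma exists_extension_conjecturing {H : ℕ → Set ℕ} {M : Learner} {C : Set (Set ℕ)}
    {L : Set ℕ} (hEx : ExLearnsIn H M C) (hL : L ∈ C) {σ : List (Option ℕ)}
    (hσ : cntL σ ⊆ L) :
    ∃ τ, σ <+: τ ∧ σ.length < τ.length ∧ cntL τ ⊆ L ∧ ∃ e, M τ = some e ∧ H e = L := by
  obtain ⟨n, e, hne, hHe, hstab⟩ := hEx L hL _ (isText_extendText hσ)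
  refine ⟨seg (extendText σ L) (max n σ.length + 1), ?_, by simp, ?_, e, ?_, hHe⟩
  · conv_lhs => rw [← seg_extendText σ L]
    exact seg_prefix (by omega)
  · exact (cntL_seg_subset _ _).trans (isText_extendText hσ).subset
  · rw [hstab _ (by omega), hne]

lemma exists_seg_eq_of_prefix_chain {σ : ℕ → List (Option ℕ)} (hpre : ∀ n, σ n <+: σ (n + 1))
    (hlen : ∀ n, (σ n).length < (σ (n + 1)).length) :
    ∃ T : ℕ → Option ℕ, (∀ n, seg T (σ n).length = σ n) ∧ cntT T ⊆ ⋃ n, cntL (σ n) := by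
  have hmono : ∀ {m n}, m ≤ n → σ m <+: σ n := fun h =>
    Nat.le_induction (List.prefix_refl _) (fun n _ ih => ih.trans (hpre n)) _ h
  have hid : ∀ n, n < (σ (n + 1)).length := fun n =>
    lt_of_lt_of_le (Nat.lt_succ_self n) ((strictMono_nat_of_lt_succ hlen).id_le (n + 1))
  obtain ⟨T, hTdef⟩ : ∃ T : ℕ → Option ℕ, ∀ i, T i = (σ (i + 1)).getD i none := ⟨_, fun _ => rfl⟩
  have hT : ∀ n, seg T (σ n).length = σ n := fun n => by
    refine List.ext_getElem (length_seg _ _) fun i hi hi' => ?_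
    rw [getElem_seg, hTdef, List.getD_eq_getElem _ _ (hid i)]
    rcases le_total (i + 1) n with h | h
    · exact (hmono h).getElem (hid i)
    · exact ((hmono h).getElem hi').symm
  refine ⟨T, hT, fun x ⟨i, hi⟩ => Set.mem_iUnion.2 ⟨i + 1, ?_⟩⟩
  rw [← hT]
  exact mem_cntL_seg hi (hid i)

end Texts

theorem not_wConfLearnsIn_of_strictMono {H : ℕ → Set ℕ} {M : Learner} {C : Set (Set ℕ)}
    {V : ℕ → Set ℕ} (hVC : ∀ n, V n ∈ C) (hV : StrictMono V) {L : Set ℕ} (hL : L ∈ C)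
    (hVL : ∀ n, V n ⊆ L) : ¬ WConfLearnsIn H M C := by
  rintro ⟨hEx, hConv⟩
  choose! next hprefix hlen hcnt e he hHe using
    fun n σ (hσ : cntL σ ⊆ V n) => exists_extension_conjecturing hEx (hVC n) hσ
  obtain ⟨σ, hσ0, hσ⟩ : ∃ σ : ℕ → List (Option ℕ), σ 0 = [] ∧ ∀ n, σ (n + 1) = next n (σ n) :=
    ⟨fun n => Nat.rec [] next n, rfl, fun _ => rfl⟩
  have hσV : ∀ n, cntL (σ n) ⊆ V n := by
    intro n
    induction n with
    | zero => intro x hx; simp [hσ0, cntL] at hx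
    | succ n ih => exact hσ n ▸ (hcnt n _ ih).trans (hV.monotone (Nat.le_succ n))
  obtain ⟨T, hT, hTσ⟩ := exists_seg_eq_of_prefix_chain (fun n => hσ n ▸ hprefix n _ (hσV n))
    (fun n => hσ n ▸ hlen n _ (hσV n))
  have hTL : cntT T ⊆ L := hTσ.trans (Set.iUnion_subset fun n => (hσV n).trans (hVL n))
  have hid : ∀ n, n ≤ (σ n).length :=
    (strictMono_nat_of_lt_succ fun n => hσ n ▸ hlen n _ (hσV n)).id_le
  obtain ⟨N, hN⟩ := hConv T ⟨L, hL, hTL⟩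
  have hMσ : ∀ n, N ≤ n → M (σ n) = M (seg T N) := fun n hn => by
    rw [← hT]
    exact hN _ (hn.trans (hid n))
  have he' : e N (σ N) = e (N + 1) (σ (N + 1)) := Option.some_injective _ <| by
    rw [← he _ _ (hσV N), ← he _ _ (hσV _), ← hσ, ← hσ, hMσ _ (by omega), hMσ _ (by omega)]
  exact (hV (Nat.lt_succ_self N)).ne <| by rw [← hHe _ _ (hσV N), ← hHe _ _ (hσV (N + 1)), he']

namespace PosEq

variable (η : PosEq)

def RelAt (u x y : ℕ) : Prop := Nat.pair x y ∈ Wstage η.re.choose u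

variable {η}

lemma RelAt.rel {u x y : ℕ} (h : η.RelAt u x y) : η.rel x y :=
  (η.re.choose_spec x y).2 (mem_W_iff_exists_Wstage.2 ⟨u, h⟩)

lemma RelAt.mono {u v x y : ℕ} (huv : u ≤ v) (h : η.RelAt u x y) : η.RelAt v x y :=
  Wstage_mono _ huv h

lemma RelAt.lt {u x y : ℕ} (h : η.RelAt u x y) : y < u :=
  (Nat.right_le_pair x y).trans_lt (lt_of_mem_Wstage h)

lemma rel_iff_eventually {x y : ℕ} : η.rel x y ↔ ∀ᶠ u in atTop, η.RelAt u x y :=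
  (η.re.choose_spec x y).trans mem_W_iff_eventually

lemma primrecPred_relAt : PrimrecPred fun p : ℕ × ℕ × ℕ => η.RelAt p.1 p.2.1 p.2.2 :=
  (primrecRel_mem_Wstage _).comp Primrec.fst
    (Primrec₂.natPair.comp (Primrec.fst.comp Primrec.snd) (Primrec.snd.comp Primrec.snd))

end PosEq

structure Setup (η : PosEq) where
  S : Set ℕ
  c : ℕ
  re : RESet S
  etaInfinite : EtaInfinite η S
  c_not_mem : c ∉ S

namespace Setup

variable {η : PosEq} (K : Setup η)

def Sstage (t : ℕ) : Set ℕ := Wstage K.re.choose t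

lemma Sstage_subset (t : ℕ) : K.Sstage t ⊆ K.S := fun _ h =>
  K.re.choose_spec ▸ mem_W_iff_exists_Wstage.2 ⟨t, h⟩

lemma mem_S_iff {x : ℕ} : x ∈ K.S ↔ ∃ t, x ∈ K.Sstage t := by
  rw [← K.re.choose_spec, mem_W_iff_exists_Wstage]
  rfl

def approx (t : ℕ) : Set ℕ := {x | ∃ y ∈ K.Sstage t, η.rel y x}

lemma approx_mono : Monotone K.approx := fun _ _ hst _ ⟨y, hy, hyx⟩ =>
  ⟨y, Wstage_mono _ hst hy, hyx⟩

lemma approx_closed (t : ℕ) : EtaClosed η (K.approx t) := fun _ ⟨y, hy, hyx⟩ _ hxz =>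
  ⟨y, hy, η.equiv.trans hyx hxz⟩

lemma Sstage_subset_approx (t : ℕ) : K.Sstage t ⊆ K.approx t := fun y hy =>
  ⟨y, hy, η.equiv.refl y⟩

lemma approx_subset_of_Sstage_subset {L : Set ℕ} (hL : EtaClosed η L) {t : ℕ}
    (h : K.Sstage t ⊆ L) : K.approx t ⊆ L := fun _ ⟨y, hy, hyx⟩ => hL y (h hy) hyx

lemma approx_subset_S (t : ℕ) : K.approx t ⊆ K.S :=
  K.approx_subset_of_Sstage_subset K.etaInfinite.1 (K.Sstage_subset t)

lemma finite_classOf_approx (t : ℕ) : (classOf η '' K.approx t).Finite := by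
  refine ((Set.finite_Iio t).image (classOf η)).subset ?_
  rintro _ ⟨x, ⟨y, hy, hyx⟩, rfl⟩
  refine ⟨y, lt_of_mem_Wstage hy, Set.ext fun z => ⟨fun h => ?_, fun h => ?_⟩⟩
  · exact η.equiv.trans (η.equiv.symm hyx) h
  · exact η.equiv.trans hyx h

def ApproxAt (t u x : ℕ) : Prop := ∃ y < t, y ∈ K.Sstage t ∧ η.RelAt u y x

lemma ApproxAt.mono {t u v x : ℕ} (huv : u ≤ v) (h : K.ApproxAt t u x) : K.ApproxAt t v x :=
  let ⟨y, hyt, hy, hyx⟩ := h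
  ⟨y, hyt, hy, hyx.mono huv⟩

lemma mem_approx_iff_exists {t x : ℕ} : x ∈ K.approx t ↔ ∃ u, K.ApproxAt t u x := by
  constructor
  · rintro ⟨y, hy, hyx⟩
    obtain ⟨u, hu⟩ := (PosEq.rel_iff_eventually.1 hyx).exists
    exact ⟨u, y, lt_of_mem_Wstage hy, hy, hu⟩
  · rintro ⟨u, y, -, hy, hyx⟩
    exact ⟨y, hy, hyx.rel⟩

lemma mem_approx_iff_eventually {t x : ℕ} :
    x ∈ K.approx t ↔ ∀ᶠ u in atTop, K.ApproxAt t u x := by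
  rw [mem_approx_iff_exists, eventually_atTop]
  exact ⟨fun ⟨u, hu⟩ => ⟨u, fun _ h => hu.mono K h⟩, fun ⟨u, hu⟩ => ⟨u, hu u le_rfl⟩⟩

lemma primrecPred_approxAt : PrimrecPred fun p : ℕ × ℕ × ℕ => K.ApproxAt p.1 p.2.1 p.2.2 := by
  have h : PrimrecRel fun (y : ℕ) (p : ℕ × ℕ × ℕ) => y ∈ K.Sstage p.1 ∧ η.RelAt p.2.1 y p.2.2 :=
    PrimrecPred.and ((primrecRel_mem_Wstage _).comp (Primrec.fst.comp Primrec.snd) Primrec.fst)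
      (PosEq.primrecPred_relAt.comp
        ((Primrec.fst.comp (Primrec.snd.comp Primrec.snd)).pair
          (Primrec.fst.pair (Primrec.snd.comp (Primrec.snd.comp Primrec.snd)))))
  exact primrecPred_exists_lt h Primrec.fst

def IsGrowth (t : ℕ) : Prop := ¬ K.Sstage (t + 1) ⊆ K.approx t

lemma approx_succ_of_not_isGrowth {t : ℕ} (h : ¬ K.IsGrowth t) :
    K.approx (t + 1) = K.approx t :=
  (K.approx_subset_of_Sstage_subset (K.approx_closed t) (not_not.1 h)).antisymm
    (K.approx_mono (Nat.le_succ t))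

lemma infinite_isGrowth : {t | K.IsGrowth t}.Infinite := by
  intro hfin
  obtain ⟨T, hT⟩ := hfin.bddAbove
  have hconst : ∀ t, T + 1 ≤ t → K.approx t = K.approx (T + 1) := fun t ht =>
    Nat.le_induction rfl (fun t ht ih => (K.approx_succ_of_not_isGrowth
      fun hg => by have := hT hg; omega).trans ih) t ht
  have hS : K.S ⊆ K.approx (T + 1) := fun x hx => by
    obtain ⟨t, ht⟩ := K.mem_S_iff.1 hx
    rw [← hconst (max t (T + 1)) (le_max_right _ _)]
    exact K.Sstage_subset_approx _ (Wstage_mono _ (le_max_left _ _) ht)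
  exact K.etaInfinite.2 ((K.finite_classOf_approx (T + 1)).subset (Set.image_mono hS))

def NonGrowthAt (t u : ℕ) : Prop := ∀ y < t + 1, y ∈ K.Sstage (t + 1) → K.ApproxAt t u y

lemma not_isGrowth_of_nonGrowthAt {t u : ℕ} (h : K.NonGrowthAt t u) : ¬ K.IsGrowth t :=
  not_not.2 fun y hy => K.mem_approx_iff_exists.2 ⟨u, h y (lt_of_mem_Wstage hy) hy⟩

lemma eventually_nonGrowthAt {t : ℕ} (h : ¬ K.IsGrowth t) :
    ∀ᶠ u in atTop, K.NonGrowthAt t u := by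
  have h' : ∀ y ∈ Set.Iio (t + 1), ∀ᶠ u in atTop, y ∈ K.Sstage (t + 1) → K.ApproxAt t u y :=
    fun y _ => eventually_imp_distrib_left.2 fun hy =>
      K.mem_approx_iff_eventually.1 (not_not.1 h hy)
  exact ((Set.finite_Iio _).eventually_all.2 h').mono fun u hu y hy => hu y hy

lemma primrecRel_nonGrowthAt : PrimrecRel K.NonGrowthAt := by
  have h : PrimrecRel fun (y : ℕ) (p : ℕ × ℕ) =>
      ¬ y ∈ K.Sstage (p.1 + 1) ∨ K.ApproxAt p.1 p.2 y :=
    PrimrecPred.or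
      ((primrecRel_mem_Wstage _).comp (Primrec.succ.comp (Primrec.fst.comp Primrec.snd))
        Primrec.fst).not
      (K.primrecPred_approxAt.comp ((Primrec.fst.comp Primrec.snd).pair
        ((Primrec.snd.comp Primrec.snd).pair Primrec.fst)))
  exact (primrecPred_forall_lt h (Primrec.succ.comp Primrec.fst)).of_eq
    fun p => by simp only [NonGrowthAt, imp_iff_not_or]

noncomputable def growthStage (n : ℕ) : ℕ := Nat.nth K.IsGrowth n

lemma isGrowth_growthStage (n : ℕ) : K.IsGrowth (K.growthStage n) :=
  Nat.nth_mem_of_infinite K.infinite_isGrowth n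

def V (n : ℕ) : Set ℕ := K.approx (K.growthStage n + 1)

lemma V_strictMono : StrictMono K.V := by
  refine strictMono_nat_of_lt_succ fun n => ?_
  have hlt : K.growthStage n < K.growthStage (n + 1) :=
    (Nat.nth_lt_nth K.infinite_isGrowth).2 (Nat.lt_succ_self n)
  refine (Set.ssubset_iff_of_subset (K.approx_mono (by omega))).2 ?_
  obtain ⟨y, hy, hny⟩ := Set.not_subset.1 (K.isGrowth_growthStage (n + 1))
  exact ⟨y, K.Sstage_subset_approx _ hy, fun h => hny (K.approx_mono (by omega) h)⟩

lemma V_closed (n : ℕ) : EtaClosed η (K.V n) := K.approx_closed _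

lemma V_subset_S (n : ℕ) : K.V n ⊆ K.S := K.approx_subset_S _

lemma c_not_mem_V (n : ℕ) : K.c ∉ K.V n := fun h => K.c_not_mem (K.V_subset_S n h)

open Classical in
-- Apparent growth stages include the true ones, so a stage with at most `n` of them below it is
-- at most `growthStage n`; conversely, `growthStage n` is eventually seen to have exactly `n`.
lemma mem_V_iff {n x : ℕ} : x ∈ K.V n ↔
    ∃ u, ∃ t < u, Nat.count (fun s => ¬ K.NonGrowthAt s u) t ≤ n ∧ K.ApproxAt (t + 1) u x := by
  classical
  have hinf := K.infinite_isGrowth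
  constructor
  · intro hx
    have hstages : ∀ᶠ u in atTop,
        ∀ s ∈ Set.Iio (K.growthStage n), ¬ K.IsGrowth s → K.NonGrowthAt s u :=
      (Set.finite_Iio _).eventually_all.2 fun s _ =>
        eventually_imp_distrib_left.2 K.eventually_nonGrowthAt
    obtain ⟨u, hu, hxu, hlt⟩ :=
      (hstages.and ((K.mem_approx_iff_eventually.1 hx).and (eventually_gt_atTop _))).exists
    refine ⟨u, _, hlt, ?_, hxu⟩
    calc Nat.count _ (K.growthStage n) ≤ Nat.count K.IsGrowth (K.growthStage n) :=
          Nat.count_mono_left fun s hs h => not_not.1 (mt (hu s hs) h)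
      _ = n := Nat.count_nth_of_infinite hinf n
  · rintro ⟨u, t, -, hcount, hxu⟩
    have ht : t ≤ K.growthStage n := (Nat.count_le_iff_le_nth hinf).1 <|
      (Nat.count_mono_left (q := fun s => ¬ K.NonGrowthAt s u) fun s _ hs h =>
        K.not_isGrowth_of_nonGrowthAt h hs).trans hcount
    exact K.approx_mono (by omega) (K.mem_approx_iff_exists.2 ⟨u, hxu⟩)

lemma rePred_mem_V : REPred fun p : ℕ × ℕ => p.2 ∈ K.V p.1 := by
  classical
  have hR : PrimrecRel fun (t : ℕ) (q : (ℕ × ℕ) × ℕ) =>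
      Nat.count (fun s => ¬ K.NonGrowthAt s q.2) t ≤ q.1.1 ∧ K.ApproxAt (t + 1) q.2 q.1.2 :=
    PrimrecPred.and
      (Primrec.nat_le.comp ((primrec_count K.primrecRel_nonGrowthAt.not).comp Primrec.fst
        (Primrec.snd.comp Primrec.snd)) (Primrec.fst.comp (Primrec.fst.comp Primrec.snd)))
      (K.primrecPred_approxAt.comp ((Primrec.succ.comp Primrec.fst).pair
        ((Primrec.snd.comp Primrec.snd).pair (Primrec.snd.comp (Primrec.fst.comp Primrec.snd)))))
  exact (rePred_exists_of_computablePred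
    (primrecPred_exists_lt hR Primrec.snd).computablePred).of_eq
    fun p => K.mem_V_iff.symm

lemma rePred_mem_approx : REPred fun p : ℕ × ℕ => p.2 ∈ K.approx p.1 :=
  (rePred_exists_of_computablePred (PrimrecPred.computablePred
    (K.primrecPred_approxAt.comp ((Primrec.fst.comp Primrec.fst).pair
      (Primrec.snd.pair (Primrec.snd.comp Primrec.fst)))))).of_eq
    fun _ => K.mem_approx_iff_exists.symm

noncomputable def VIdx : ℕ → ℕ := (exists_computable_W_eq K.rePred_mem_V).choose

lemma computable_VIdx : Computable K.VIdx := (exists_computable_W_eq K.rePred_mem_V).choose_spec.1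

lemma W_VIdx (n : ℕ) : W (K.VIdx n) = K.V n :=
  (exists_computable_W_eq K.rePred_mem_V).choose_spec.2 n

noncomputable def approxIdx : ℕ → ℕ := (exists_computable_W_eq K.rePred_mem_approx).choose

lemma computable_approxIdx : Computable K.approxIdx :=
  (exists_computable_W_eq K.rePred_mem_approx).choose_spec.1

lemma W_approxIdx (t : ℕ) : W (K.approxIdx t) = K.approx t :=
  (exists_computable_W_eq K.rePred_mem_approx).choose_spec.2 t

noncomputable def famIdx : ℕ → ℕ
  | 0 => univIdx
  | n + 1 => K.VIdx n

def family : Set (Set ℕ) := Set.range fun i => W (K.famIdx i)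

lemma univ_mem_family : Set.univ ∈ K.family := ⟨0, W_univIdx⟩

lemma V_mem_family (n : ℕ) : K.V n ∈ K.family := ⟨n + 1, K.W_VIdx n⟩

lemma computable_famIdx : Computable K.famIdx :=
  (Computable.nat_casesOn Computable.id (Computable.const univIdx)
    (K.computable_VIdx.comp Computable.snd).to₂).of_eq fun i => by cases i <;> rfl

lemma W_famIdx_injective : Function.Injective fun i => W (K.famIdx i) := by
  rintro (_ | m) (_ | n) h <;> simp only [famIdx, W_univIdx, W_VIdx] at h
  · rfl
  · exact absurd (h ▸ Set.mem_univ K.c) (K.c_not_mem_V n)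
  · exact absurd (h ▸ Set.mem_univ K.c) (K.c_not_mem_V m)
  · rw [K.V_strictMono.injective h]

theorem etaFamily_family : EtaFamily η K.family := by
  refine ⟨?_, K.famIdx, K.computable_famIdx, fun i j h => K.W_famIdx_injective h, rfl⟩
  rintro _ ⟨_ | n, rfl⟩
  · simp only [famIdx, W_univIdx]
    exact fun _ _ => Set.subset_univ _
  · simp only [famIdx, W_VIdx]
    exact K.V_closed n

def Detects (σ : List (Option ℕ)) : Prop := ∃ y < σ.length, some y ∈ σ ∧ η.RelAt σ.length K.c y

lemma primrecPred_detects : PrimrecPred K.Detects := by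
  have hrel : PrimrecRel fun (y : ℕ) (σ : List (Option ℕ)) => η.RelAt σ.length K.c y :=
    PosEq.primrecPred_relAt.comp ((Primrec.list_length.comp Primrec.snd).pair
      ((Primrec.const K.c).pair Primrec.fst))
  exact primrecPred_exists_lt (primrecRel_some_mem.and hrel) Primrec.list_length

lemma eventually_detects {T : ℕ → Option ℕ} (hT : IsText T Set.univ) :
    ∀ᶠ j in atTop, K.Detects (seg T j) := by
  obtain ⟨i, hi⟩ : K.c ∈ cntT T := hT ▸ Set.mem_univ _
  filter_upwards [PosEq.rel_iff_eventually.1 (η.equiv.refl K.c), eventually_gt_atTop i]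
    with j hj hij
  exact ⟨K.c, by simpa using hj.lt, mem_cntL_seg hi hij, by simpa using hj⟩

lemma not_detects_of_subset {σ : List (Option ℕ)} (h : cntL σ ⊆ K.S) : ¬ K.Detects σ :=
  fun ⟨y, _, hy, hcy⟩ => K.c_not_mem (K.etaInfinite.1 y (h hy) (η.equiv.symm hcy.rel))

lemma exists_escape {L : Set ℕ} (h : ¬ K.S ⊆ L) : ∃ t, ¬ K.Sstage (t + 1) ⊆ L := by
  obtain ⟨x, hxS, hxL⟩ := Set.not_subset.1 h
  obtain ⟨t, ht⟩ := K.mem_S_iff.1 hxS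
  exact ⟨t, fun hsub => hxL (hsub (Wstage_mono _ (Nat.le_succ t) ht))⟩

open Classical in
/-- The last stage `t` with `Sstage t ⊆ L`: the enumeration of `S` leaves `L` at stage `t + 1`. -/
noncomputable def escape (L : Set ℕ) (h : ¬ K.S ⊆ L) : ℕ := Nat.find (K.exists_escape h)

lemma Sstage_escape_subset {L : Set ℕ} (h : ¬ K.S ⊆ L) : K.Sstage (K.escape L h) ⊆ L := by
  classical
  rcases hk : K.escape L h with _ | t
  · simp [Sstage, Wstage_zero]
  · exact not_not.1 (Nat.find_min (K.exists_escape h)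
      (hk ▸ Nat.lt_succ_self t : t < K.escape L h))

lemma escape_eq_of_subset {L L' : Set ℕ} (h : ¬ K.S ⊆ L) (h' : ¬ K.S ⊆ L') (hL' : L' ⊆ L)
    (hsub : K.Sstage (K.escape L h) ⊆ L') : K.escape L' h' = K.escape L h := by
  classical
  refine le_antisymm (Nat.find_min' _ fun hs => Nat.find_spec (K.exists_escape h) (hs.trans hL'))
    ((Nat.le_find_iff _ _).2 fun m hm hs => hs ((Wstage_mono _ hm).trans hsub))

lemma not_S_subset_cntL (σ : List (Option ℕ)) : ¬ K.S ⊆ cntL σ := fun h =>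
  K.etaInfinite.2 (((σ.finite_toSet.preimage (Option.some_injective _).injOn).subset h).image _)

lemma not_S_subset_V (n : ℕ) : ¬ K.S ⊆ K.V n := fun h => by
  obtain ⟨y, hy, hny⟩ := Set.exists_of_ssubset (K.V_strictMono (Nat.lt_succ_self n))
  exact hny (h (K.V_subset_S _ hy))

lemma approx_escape_V (n : ℕ) : K.approx (K.escape (K.V n) (K.not_S_subset_V n)) = K.V n := by
  classical
  refine (K.approx_subset_of_Sstage_subset (K.V_closed n) (K.Sstage_escape_subset _)).antisymm
    (K.approx_mono ?_)
  rw [escape, Nat.le_find_iff]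
  exact fun m hm hs => hs ((Wstage_mono _ (by omega)).trans (K.Sstage_subset_approx _))

lemma eventually_escape_cntL_seg {n : ℕ} {T : ℕ → Option ℕ} (hT : IsText T (K.V n)) :
    ∀ᶠ j in atTop, K.escape (cntL (seg T j)) (K.not_S_subset_cntL _) =
      K.escape (K.V n) (K.not_S_subset_V n) := by
  have hfin : (K.Sstage (K.escape (K.V n) (K.not_S_subset_V n))).Finite :=
    (Set.finite_Iio _).subset fun _ => lt_of_mem_Wstage
  filter_upwards [eventually_subset_cntL_seg hfin
    ((K.Sstage_escape_subset _).trans hT.symm.subset)] with j hj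
  exact K.escape_eq_of_subset _ _ ((cntL_seg_subset T j).trans hT.subset) hj

open Classical in
noncomputable def learner : Learner := fun σ =>
  if K.Detects σ then some univIdx
  else some (K.approxIdx (K.escape (cntL σ) (K.not_S_subset_cntL σ)))

lemma computable_escape_cntL : Computable fun σ => K.escape (cntL σ) (K.not_S_subset_cntL σ) := by
  classical
  have hR : PrimrecRel fun (y : ℕ) (p : List (Option ℕ) × ℕ) =>
      ¬ y ∈ K.Sstage (p.2 + 1) ∨ some y ∈ p.1 :=
    PrimrecPred.or ((primrecRel_mem_Wstage _).comp
      (Primrec.succ.comp (Primrec.snd.comp Primrec.snd)) Primrec.fst).not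
      (primrecRel_some_mem.comp Primrec.fst (Primrec.fst.comp Primrec.snd))
  refine Computable.find ((primrecPred_forall_lt hR (Primrec.succ.comp Primrec.snd)).not
    |>.computablePred.of_eq fun p => not_congr ?_) _
  exact ⟨fun h y hy => (h y (lt_of_mem_Wstage hy)).resolve_left (not_not.2 hy),
    fun h y _ => or_iff_not_imp_left.2 fun hy => h (not_not.1 hy)⟩

lemma computable_learner : Computable K.learner := by
  classical
  exact (Computable.cond K.primrecPred_detects.decide.to_comp (Computable.const (some univIdx))
    (Computable.option_some.comp (K.computable_approxIdx.comp K.computable_escape_cntL))).of_eq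
    fun σ => by by_cases h : K.Detects σ <;> simp [learner, h]

theorem exLearnsIn_family : ExLearnsIn W K.learner K.family := by
  refine exLearnsIn_of_eventually ?_
  rintro _ ⟨_ | n, rfl⟩ T hT
  · simp only [famIdx, W_univIdx] at hT ⊢
    exact ⟨univIdx, W_univIdx, (K.eventually_detects hT).mono fun j hj => if_pos hj⟩
  · simp only [famIdx, W_VIdx] at hT ⊢
    refine ⟨_, (K.W_approxIdx _).trans (K.approx_escape_V n),
      (K.eventually_escape_cntL_seg hT).mono fun j hj => ?_⟩
    rw [learner, if_neg (K.not_detects_of_subset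
      ((cntL_seg_subset T j).trans (hT.subset.trans (K.V_subset_S n)))), hj]

end Setup

theorem Setup.exists_family {η : PosEq} (K : Setup η) :
    ∃ C : Set (Set ℕ), EtaFamily η C ∧ ExLearnable C ∧ ¬ WConfLearnable C :=
  ⟨K.family, K.etaFamily_family, ⟨K.learner, K.computable_learner, K.exLearnsIn_family⟩,
    fun ⟨_, _, hM⟩ => not_wConfLearnsIn_of_strictMono K.V_mem_family K.V_strictMono
      K.univ_mem_family (fun _ => Set.subset_univ _) hM⟩

/-- If there are at least two η-infinite r.e. sets, then there is
an η-family that is explanatorily learnable but not weakly confidently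
learnable. -/
theorem stmt16 (η : PosEq)
    (h : ∃ S₁ S₂ : Set ℕ, S₁ ≠ S₂ ∧ RESet S₁ ∧ RESet S₂ ∧
      EtaInfinite η S₁ ∧ EtaInfinite η S₂) :
    ∃ C : Set (Set ℕ), EtaFamily η C ∧ ExLearnable C ∧ ¬ WConfLearnable C := by
  obtain ⟨S₁, S₂, hne, hS₁, hS₂, hI₁, hI₂⟩ := h
  obtain ⟨c, hc⟩ : ∃ c, ¬ (c ∈ S₁ ↔ c ∈ S₂) := by simpa [Set.ext_iff] using hne
  by_cases hc₂ : c ∈ S₂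
  · exact (Setup.mk S₁ c hS₁ hI₁ fun hc₁ => hc ⟨fun _ => hc₂, fun _ => hc₁⟩).exists_family
  · exact (Setup.mk S₂ c hS₂ hI₂ hc₂).exists_family

end PEL
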